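/- arXiv:1810.02703 — 2 statements merged into one kernel-verified Lean document; each statement's English description precedes it below -/
import Mathlib

section
/- Let u be an n×n upper-triangular complex matrix with 1's on the diagonal and λ an n×n strictly lower-triangular complex matrix. Then for every pair (i,j) with i > j, the rank of the lower-left submatrix of (uλu⁻¹)_low with rows i, i+1, ..., n and columns 1, ..., j equals the rank of the corresponding submatrix of λ, where A_low denotes the strictly lower-triangular part of A. -/
/-!
Since `u` and `u⁻¹` are upper triangular, `i ≤ p` and `u p k ≠ 0` force `i ≤ k`, while
`u⁻¹ l q ≠ 0` and `q ≤ j` force `l ≤ j`. Hence the block of `u λ u⁻¹` with rows `≥ i` and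
columns `≤ j` is `u[≥i, ≥i] · λ[≥i, ≤j] · u⁻¹[≤j, ≤j]`, a product of `λ`'s block with two
invertible triangular matrices. As `j < i`, this block lies strictly below the diagonal, so
taking the lower part does not change it.
-/

/-- The strictly lower-triangular part of a matrix. -/
def matLow {n : ℕ} (A : Matrix (Fin n) (Fin n) ℂ) : Matrix (Fin n) (Fin n) ℂ :=
  Matrix.of fun p q => if q < p then A p q else 0

open Matrix

namespace Matrix.IsUpperTriangular

variable {m R : Type*} [LinearOrder m] [Fintype m]

lemma submatrix_mul_of_isUpperSet [NonUnitalNonAssocSemiring R] {u : Matrix m m R}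
    (hu : u.IsUpperTriangular) {P : m → Prop} [DecidablePred P] (hP : IsUpperSet {a | P a})
    {n o : Type*} (M : Matrix m n R) (f : o → n) :
    (u * M).submatrix (Subtype.val : {a // P a} → m) f =
      (u.submatrix Subtype.val Subtype.val : Matrix {a // P a} {a // P a} R) *
        (M.submatrix Subtype.val f : Matrix {a // P a} o R) := by
  ext p q
  simp only [submatrix_apply, Matrix.mul_apply]
  have hout (k : {k // ¬P k}) : u p k * M k (f q) = 0 := by
    rw [hu (lt_of_not_ge fun hpk => k.2 (hP hpk p.2)), zero_mul]
  rw [← Fintype.sum_subtype_add_sum_subtype P, Fintype.sum_eq_zero _ hout, add_zero]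

lemma mul_submatrix_of_isLowerSet [NonUnitalNonAssocSemiring R] {v : Matrix m m R}
    (hv : v.IsUpperTriangular) {Q : m → Prop} [DecidablePred Q] (hQ : IsLowerSet {a | Q a})
    {l o : Type*} (M : Matrix l m R) (g : o → l) :
    (M * v).submatrix g (Subtype.val : {a // Q a} → m) =
      (M.submatrix g Subtype.val : Matrix o {a // Q a} R) *
        (v.submatrix Subtype.val Subtype.val : Matrix {a // Q a} {a // Q a} R) := by
  ext p q
  simp only [submatrix_apply, Matrix.mul_apply]
  have hout (k : {k // ¬Q k}) : M (g p) k * v k q = 0 := by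
    rw [hv (lt_of_not_ge fun hkq => k.2 (hQ hkq q.2)), mul_zero]
  rw [← Fintype.sum_subtype_add_sum_subtype Q, Fintype.sum_eq_zero _ hout, add_zero]

lemma isUnit_det_submatrix_subtype [CommRing R] {u : Matrix m m R} (hu : u.IsUpperTriangular)
    (hdet : IsUnit u.det) (P : m → Prop) [DecidablePred P] :
    IsUnit (u.submatrix (Subtype.val : {a // P a} → m) Subtype.val).det := by
  have hsub : (u.submatrix (Subtype.val : {a // P a} → m) Subtype.val).IsUpperTriangular :=
    fun _ _ h => hu h
  rw [det_of_isUpperTriangular hu, IsUnit.prod_univ_iff] at hdet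
  rw [det_of_isUpperTriangular hsub, IsUnit.prod_univ_iff]
  exact fun a => hdet a

end Matrix.IsUpperTriangular

lemma submatrix_matLow_of_lt {n : ℕ} (A : Matrix (Fin n) (Fin n) ℂ) {r c : Type*}
    (f : r → Fin n) (g : c → Fin n) (hfg : ∀ p q, g q < f p) :
    (matLow A).submatrix f g = A.submatrix f g := by
  ext p q
  simp [matLow, hfg p q]

theorem stmt4_general (n : ℕ) (u lam : Matrix (Fin n) (Fin n) ℂ)
    (hu : ∀ p q : Fin n, q < p → u p q = 0) (hud : ∀ p : Fin n, u p p = 1)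
    (i j : Fin n) (hij : j < i) :
    ((matLow (u * lam * u⁻¹)).submatrix
        (fun p : {p : Fin n // i ≤ p} => (p : Fin n))
        (fun q : {q : Fin n // q ≤ j} => (q : Fin n))).rank =
    (lam.submatrix
        (fun p : {p : Fin n // i ≤ p} => (p : Fin n))
        (fun q : {q : Fin n // q ≤ j} => (q : Fin n))).rank := by
  have hut : u.IsUpperTriangular := fun p q h => hu p q h
  have hdet : IsUnit u.det := by simp [det_of_isUpperTriangular hut, hud]
  have hinvt : u⁻¹.IsUpperTriangular :=
    have := u.invertibleOfIsUnitDet hdet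
    blockTriangular_inv_of_blockTriangular hut
  rw [submatrix_matLow_of_lt _ _ _ fun p q => q.2.trans_lt (hij.trans_le p.2),
    IsUpperTriangular.mul_submatrix_of_isLowerSet hinvt (isLowerSet_Iic j),
    IsUpperTriangular.submatrix_mul_of_isUpperSet hut (isUpperSet_Ici i),
    rank_mul_eq_left_of_isUnit_det _ _ (IsUpperTriangular.isUnit_det_submatrix_subtype hinvt
      (isUnit_nonsing_inv_det u hdet) _),
    rank_mul_eq_right_of_isUnit_det _ _ (IsUpperTriangular.isUnit_det_submatrix_subtype hut hdet _)]

/-- Let `u` be upper-triangular with unit diagonal and `lam` strictly lower-triangular.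
Then for every pair `(i,j)` with `i > j`, the rank of the lower-left submatrix
(rows `i,…,n`, columns `1,…,j`) of `(u * lam * u⁻¹)_low` equals the rank of the
corresponding submatrix of `lam`. -/
theorem stmt4 (n : ℕ) (u lam : Matrix (Fin n) (Fin n) ℂ)
    (hu : ∀ p q : Fin n, q < p → u p q = 0) (hud : ∀ p : Fin n, u p p = 1)
    (hlam : ∀ p q : Fin n, p ≤ q → lam p q = 0)
    (i j : Fin n) (hij : j < i) :
    ((matLow (u * lam * u⁻¹)).submatrix
        (fun p : {p : Fin n // i ≤ p} => (p : Fin n))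
        (fun q : {q : Fin n // q ≤ j} => (q : Fin n))).rank =
    (lam.submatrix
        (fun p : {p : Fin n // i ≤ p} => (p : Fin n))
        (fun q : {q : Fin n // q ≤ j} => (q : Fin n))).rank :=
  stmt4_general n u lam hu hud i j hij
end

section
/- Let σ be a basis involution in the hyperoctahedral group W of rank n. Then there is a unique set D of pairwise orthogonal roots contained in {ε_i - ε_j : i<j} ∪ {ε_i + ε_j : i<j} ⊆ B_n⁺ such that σ = Π_{α∈D} s_α, where s_{ε_i-ε_j} = (i,j)(-j,-i) and s_{ε_i+ε_j} = (i,-j)(j,-i) in S_{±n}. -/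
/-- Roots of the form `ε_i ± ε_j` with `i < j`: the pair `(i,j)` together with a sign
(`true` for `ε_i + ε_j`, `false` for `ε_i - ε_j`). -/
def SRoot (n : ℕ) : Type :=
  {p : Fin n × Fin n // p.1 < p.2} × Bool

instance (n : ℕ) : DecidableEq (SRoot n) := by
  unfold SRoot; infer_instance

/-- The vector in `ℝⁿ` corresponding to the root. -/
noncomputable def rootVec {n : ℕ} (r : SRoot n) : EuclideanSpace ℝ (Fin n) :=
  EuclideanSpace.single r.1.1.1 (1 : ℝ) +
    (if r.2 then (1 : ℝ) else -1) • EuclideanSpace.single r.1.1.2 (1 : ℝ)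

/-- The reflection `s_α ∈ S_{±n}` of the root `α`: `s_{ε_i-ε_j} = (i,j)(-j,-i)` and
`s_{ε_i+ε_j} = (i,-j)(j,-i)`, acting on `{±1,…,±n}` modelled as `Fin n × Bool`
(`(i,true)` is the positive letter, `(i,false)` the negative one). -/
def rootPerm {n : ℕ} (r : SRoot n) : Equiv.Perm (Fin n × Bool) :=
  if r.2 then
    Equiv.swap (r.1.1.1, true) (r.1.1.2, false) * Equiv.swap (r.1.1.2, true) (r.1.1.1, false)
  else
    Equiv.swap (r.1.1.1, true) (r.1.1.2, true) * Equiv.swap (r.1.1.1, false) (r.1.1.2, false)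

/-!
Two orthogonal roots `ε_i ± ε_j` either have disjoint supports or are `ε_i - ε_j` and
`ε_i + ε_j`; in both cases their reflections commute, so a product over `D` may be started
with any of its factors. The reflections of `ε_i - ε_j` and `ε_i + ε_j` multiply to a map
sending `i` to `-i`, which a basis involution does not do, so the roots in `D` have disjoint
supports and `D` is read off from `σ`: `ε_i ∓ ε_j ∈ D` iff `σ(i) = ±j`. Conversely, for a
basis involution `σ` these roots have disjoint supports and their product agrees with `σ` on
every letter.
-/

section PermProd

variable {α β : Type*}

theorem List.prod_map_perm_apply_eq_self {g : β → Equiv.Perm α} {l : List β} {x : α}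
    (h : ∀ b ∈ l, g b x = x) : (l.map g).prod x = x :=
  List.prod_induction (fun f : Equiv.Perm α => f x = x)
    (fun f f' hf hf' => by rw [Equiv.Perm.mul_apply, hf', hf]) rfl
    (by simpa only [List.mem_map, forall_exists_index, and_imp, forall_apply_eq_imp_iff₂])

theorem List.prod_map_eq_mul_prod_map_erase {M : Type*} [Monoid M] [DecidableEq β] {g : β → M}
    {l : List β} (hl : l.Pairwise fun b c => Commute (g b) (g c)) {a : β} (ha : a ∈ l) :
    (l.map g).prod = g a * ((l.erase a).map g).prod := by
  rw [((List.perm_cons_erase ha).map g).prod_eq' (List.pairwise_map.mpr hl), List.map_cons,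
    List.prod_cons]

end PermProd

namespace SRoot

variable {n : ℕ}

instance : Fintype (SRoot n) := by unfold SRoot; infer_instance

def i (r : SRoot n) : Fin n := r.1.1.1

def j (r : SRoot n) : Fin n := r.1.1.2

theorem i_lt_j (r : SRoot n) : r.i < r.j := r.1.2

theorem ext {r s : SRoot n} (hi : r.i = s.i) (hj : r.j = s.j) (h2 : r.2 = s.2) : r = s := by
  obtain ⟨⟨⟨ri, rj⟩, _⟩, rb⟩ := r
  obtain ⟨⟨⟨si, sj⟩, _⟩, sb⟩ := s
  simp only [i, j] at hi hj h2
  subst hi hj h2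
  rfl

def support (r : SRoot n) : Finset (Fin n) := {r.i, r.j}

theorem mem_support {r : SRoot n} {k : Fin n} : k ∈ r.support ↔ k = r.i ∨ k = r.j := by
  simp [support]

theorem i_mem_support (r : SRoot n) : r.i ∈ r.support := mem_support.mpr (Or.inl rfl)

theorem j_mem_support (r : SRoot n) : r.j ∈ r.support := mem_support.mpr (Or.inr rfl)

end SRoot

variable {n : ℕ}

open SRoot

theorem inner_rootVec_eq_zero_iff (r s : SRoot n) :
    (inner ℝ (rootVec r) (rootVec s) : ℝ) = 0 ↔
      (r.1 = s.1 ∧ r.2 ≠ s.2) ∨ Disjoint r.support s.support := by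
  obtain ⟨⟨⟨a, b⟩, hab : a < b⟩, c⟩ := r
  obtain ⟨⟨⟨d, e⟩, hde : d < e⟩, f⟩ := s
  simp only [rootVec, inner_add_left, inner_add_right, real_inner_smul_left, real_inner_smul_right,
    EuclideanSpace.inner_single_left, PiLp.single_apply, support, i, j,
    Finset.disjoint_insert_left, Finset.disjoint_singleton_left, Finset.mem_insert,
    Finset.mem_singleton, Subtype.ext_iff, Prod.ext_iff]
  by_cases h1 : a = d <;> by_cases h2 : a = e <;> by_cases h3 : b = d <;> by_cases h4 : b = e <;>
    cases c <;> cases f <;> simp [h1, h2, h3, h4, hde.ne, hde.ne'] <;> omega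

theorem rootPerm_apply_i (r : SRoot n) (t : Bool) : rootPerm r (r.i, t) = (r.j, xor r.2 t) := by
  obtain ⟨⟨⟨a, b⟩, hab : a < b⟩, c⟩ := r
  cases c <;> cases t <;> simp [rootPerm, i, j, Equiv.swap_apply_def, hab.ne, hab.ne']

theorem rootPerm_apply_j (r : SRoot n) (t : Bool) : rootPerm r (r.j, t) = (r.i, xor r.2 t) := by
  obtain ⟨⟨⟨a, b⟩, hab : a < b⟩, c⟩ := r
  cases c <;> cases t <;> simp [rootPerm, i, j, Equiv.swap_apply_def, hab.ne, hab.ne']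

theorem rootPerm_apply_of_notMem_support {r : SRoot n} {k : Fin n} (hk : k ∉ r.support)
    (t : Bool) : rootPerm r (k, t) = (k, t) := by
  obtain ⟨⟨⟨a, b⟩, hab : a < b⟩, c⟩ := r
  obtain ⟨ha, hb⟩ : k ≠ a ∧ k ≠ b := by simpa [support, i, j, not_or] using hk
  cases c <;> simp [rootPerm, Equiv.swap_apply_def, ha, hb]

theorem eq_of_rootPerm_apply_eq {r s : SRoot n} {k : Fin n} {t : Bool} (hk : k ∈ r.support)
    (h : rootPerm s (k, t) = rootPerm r (k, t)) : s = r := by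
  have hr := r.i_lt_j
  have hs := s.i_lt_j
  by_cases hks : k ∈ s.support
  · rcases mem_support.mp hks with rfl | rfl <;> rcases mem_support.mp hk with e | e <;>
      simp only [rootPerm_apply_i, rootPerm_apply_j] at h <;> rw [e] at h <;>
      simp only [rootPerm_apply_i, rootPerm_apply_j, Prod.ext_iff, Bool.xor_left_inj] at h <;>
      first | omega | exact SRoot.ext (by omega) (by omega) h.2
  · rw [rootPerm_apply_of_notMem_support hks] at h
    rcases mem_support.mp hk with rfl | rfl <;>
      simp only [rootPerm_apply_i, rootPerm_apply_j, Prod.ext_iff] at h <;> omega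

theorem commute_rootPerm_of_inner_eq_zero {r s : SRoot n}
    (h : (inner ℝ (rootVec r) (rootVec s) : ℝ) = 0) : Commute (rootPerm r) (rootPerm s) := by
  rcases (inner_rootVec_eq_zero_iff r s).mp h with ⟨hpair, -⟩ | hdisj
  · have hi : s.i = r.i := congrArg (fun p => p.1.1) hpair.symm
    have hj : s.j = r.j := congrArg (fun p => p.1.2) hpair.symm
    have hsi (t : Bool) : rootPerm s (r.i, t) = (r.j, xor s.2 t) := by
      rw [← hi, rootPerm_apply_i, hj]
    have hsj (t : Bool) : rootPerm s (r.j, t) = (r.i, xor s.2 t) := by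
      rw [← hj, rootPerm_apply_j, hi]
    refine Equiv.ext fun ⟨k, t⟩ => ?_
    by_cases hk : k ∈ r.support
    · rcases mem_support.mp hk with rfl | rfl <;>
        simp only [Equiv.Perm.mul_apply, rootPerm_apply_i, rootPerm_apply_j, hsi, hsj,
          Bool.xor_left_comm]
    · have hks : k ∉ s.support := by simpa only [support, hi, hj] using hk
      simp only [Equiv.Perm.mul_apply, rootPerm_apply_of_notMem_support hk,
        rootPerm_apply_of_notMem_support hks]
  · refine Equiv.Perm.Disjoint.commute fun ⟨k, t⟩ => ?_
    by_cases hk : k ∈ r.support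
    · exact Or.inr (rootPerm_apply_of_notMem_support (Finset.disjoint_left.mp hdisj hk) t)
    · exact Or.inl (rootPerm_apply_of_notMem_support hk t)

section ProductOfReflections

variable {l : List (SRoot n)}

theorem prod_rootPerm_apply_of_forall_notMem_support {k : Fin n}
    (h : ∀ r ∈ l, k ∉ r.support) (t : Bool) : (l.map rootPerm).prod (k, t) = (k, t) :=
  List.prod_map_perm_apply_eq_self fun r hr => rootPerm_apply_of_notMem_support (h r hr) t

theorem prod_rootPerm_eq_mul_erase (hnd : l.Nodup)
    (horth : ∀ r ∈ l, ∀ s ∈ l, r ≠ s → (inner ℝ (rootVec r) (rootVec s) : ℝ) = 0)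
    {r : SRoot n} (hr : r ∈ l) :
    (l.map rootPerm).prod = rootPerm r * ((l.erase r).map rootPerm).prod :=
  List.prod_map_eq_mul_prod_map_erase
    (hnd.pairwise_of_forall_ne fun r hr s hs hne =>
      commute_rootPerm_of_inner_eq_zero (horth r hr s hs hne)) hr

theorem prod_rootPerm_apply_of_mem_support (hnd : l.Nodup)
    (hdisj : ∀ r ∈ l, ∀ s ∈ l, r ≠ s → Disjoint r.support s.support)
    {r : SRoot n} (hr : r ∈ l) {k : Fin n} (hk : k ∈ r.support) (t : Bool) :
    (l.map rootPerm).prod (k, t) = rootPerm r (k, t) := by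
  have horth r hr s hs hne := (inner_rootVec_eq_zero_iff r s).mpr (Or.inr (hdisj r hr s hs hne))
  rw [prod_rootPerm_eq_mul_erase hnd horth hr, Equiv.Perm.mul_apply,
    prod_rootPerm_apply_of_forall_notMem_support]
  intro s hs
  rw [hnd.mem_erase_iff] at hs
  exact Finset.disjoint_left.mp (hdisj r hr s hs.2 (Ne.symm hs.1)) hk

theorem disjoint_support_of_prod_rootPerm_ne (hnd : l.Nodup)
    (horth : ∀ r ∈ l, ∀ s ∈ l, r ≠ s → (inner ℝ (rootVec r) (rootVec s) : ℝ) = 0)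
    (hbasis : ∀ i : Fin n, (l.map rootPerm).prod (i, true) ≠ (i, false)) :
    ∀ r ∈ l, ∀ s ∈ l, r ≠ s → Disjoint r.support s.support := by
  intro r hr s hs hne
  refine ((inner_rootVec_eq_zero_iff r s).mp (horth r hr s hs hne)).resolve_left ?_
  rintro ⟨hpair, hsign⟩
  have hi : s.i = r.i := congrArg (fun p => p.1.1) hpair.symm
  have hj : s.j = r.j := congrArg (fun p => p.1.2) hpair.symm
  have hs' : s ∈ l.erase r := hnd.mem_erase_iff.mpr ⟨hne.symm, hs⟩
  have hfix : (((l.erase r).erase s).map rootPerm).prod (r.i, true) = (r.i, true) := by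
    refine prod_rootPerm_apply_of_forall_notMem_support (fun x hx => ?_) true
    obtain ⟨hxs, hxr, hx⟩ : x ≠ s ∧ x ≠ r ∧ x ∈ l := by
      rwa [(hnd.erase r).mem_erase_iff, hnd.mem_erase_iff] at hx
    have hdisj := ((inner_rootVec_eq_zero_iff r x).mp (horth r hr x hx hxr.symm)).resolve_left
      fun ⟨hp, hb⟩ => hxs (Prod.ext (hp.symm.trans hpair)
        ((Bool.eq_not_of_ne hb.symm).trans (Bool.eq_not_of_ne hsign.symm).symm))
    exact Finset.disjoint_left.mp hdisj r.i_mem_support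
  -- every other factor fixes `±i`, and `s_r s_s` sends `i` to `-i`
  apply hbasis r.i
  rw [prod_rootPerm_eq_mul_erase hnd horth hr, Equiv.Perm.mul_apply,
    prod_rootPerm_eq_mul_erase (hnd.erase r)
      (fun x hx y hy => horth x (List.mem_of_mem_erase hx) y (List.mem_of_mem_erase hy)) hs',
    Equiv.Perm.mul_apply, hfix, ← hi, rootPerm_apply_i, hj, rootPerm_apply_j, hi]
  simp [Bool.eq_not_of_ne hsign.symm]

end ProductOfReflections

def rootsOf (σ : Equiv.Perm (Fin n × Bool)) : Finset (SRoot n) :=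
  Finset.univ.filter fun r => σ (r.i, true) = (r.j, !r.2)

theorem mem_rootsOf {σ : Equiv.Perm (Fin n × Bool)} {r : SRoot n} :
    r ∈ rootsOf σ ↔ σ (r.i, true) = (r.j, !r.2) := by
  simp [rootsOf]

theorem toFinset_eq_rootsOf_prod {l : List (SRoot n)} (hnd : l.Nodup)
    (horth : ∀ r ∈ l, ∀ s ∈ l, r ≠ s → (inner ℝ (rootVec r) (rootVec s) : ℝ) = 0)
    (hbasis : ∀ i : Fin n, (l.map rootPerm).prod (i, true) ≠ (i, false)) :
    l.toFinset = rootsOf (l.map rootPerm).prod := by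
  have hdisj := disjoint_support_of_prod_rootPerm_ne hnd horth hbasis
  ext r
  rw [List.mem_toFinset, mem_rootsOf, ← Bool.xor_true, ← rootPerm_apply_i]
  refine ⟨fun hr => prod_rootPerm_apply_of_mem_support hnd hdisj hr r.i_mem_support true, fun h => ?_⟩
  by_cases hk : ∃ x ∈ l, r.i ∈ x.support
  · obtain ⟨x, hx, hk⟩ := hk
    rw [prod_rootPerm_apply_of_mem_support hnd hdisj hx hk] at h
    exact eq_of_rootPerm_apply_eq r.i_mem_support h ▸ hx
  · push Not at hk
    rw [prod_rootPerm_apply_of_forall_notMem_support hk, rootPerm_apply_i] at h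
    exact absurd (congrArg Prod.fst h) r.i_lt_j.ne

section Hyperoctahedral

-- membership in the hyperoctahedral group `W`
def IsSignedPerm (σ : Equiv.Perm (Fin n × Bool)) : Prop :=
  ∀ p : Fin n × Bool, σ (p.1, !p.2) = ((σ p).1, !(σ p).2)

variable {σ : Equiv.Perm (Fin n × Bool)}

theorem apply_false_eq (hw : IsSignedPerm σ) (k : Fin n) :
    σ (k, false) = ((σ (k, true)).1, !(σ (k, true)).2) := by
  simpa using hw (k, true)

theorem apply_true_symm (hw : IsSignedPerm σ) (hinv : σ * σ = 1) {i j : Fin n}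
    {c : Bool} (h : σ (i, true) = (j, c)) : σ (j, true) = (i, c) := by
  have h' : σ (j, c) = (i, true) := by
    rw [← h, ← Equiv.Perm.mul_apply, hinv, Equiv.Perm.one_apply]
  cases c
  · simpa [h'] using hw (j, false)
  · exact h'

theorem apply_eq_rootPerm_apply_of_mem_rootsOf (hw : IsSignedPerm σ) (hinv : σ * σ = 1)
    {r : SRoot n} (hr : r ∈ rootsOf σ) {k : Fin n} (hk : k ∈ r.support) (t : Bool) :
    σ (k, t) = rootPerm r (k, t) := by
  rw [mem_rootsOf] at hr
  have hj := apply_true_symm hw hinv hr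
  rcases mem_support.mp hk with rfl | rfl <;> cases t <;>
    simp [apply_false_eq hw, hr, hj, rootPerm_apply_i, rootPerm_apply_j]

theorem rootsOf_pairwise_disjoint (hw : IsSignedPerm σ) (hinv : σ * σ = 1) :
    ∀ r ∈ rootsOf σ, ∀ s ∈ rootsOf σ, r ≠ s → Disjoint r.support s.support := by
  intro r hr s hs hne
  refine Finset.disjoint_left.mpr fun k hkr hks => hne (eq_of_rootPerm_apply_eq hks (t := true) ?_)
  rw [← apply_eq_rootPerm_apply_of_mem_rootsOf hw hinv hr hkr,
    ← apply_eq_rootPerm_apply_of_mem_rootsOf hw hinv hs hks]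

theorem apply_eq_self_of_forall_notMem_support (hw : IsSignedPerm σ) (hinv : σ * σ = 1)
    (hbasis : ∀ i : Fin n, σ (i, true) ≠ (i, false)) {k : Fin n}
    (hk : ∀ r ∈ rootsOf σ, k ∉ r.support) (t : Bool) : σ (k, t) = (k, t) := by
  suffices h : σ (k, true) = (k, true) by cases t <;> simp [apply_false_eq hw, h]
  generalize hmc : σ (k, true) = p
  obtain ⟨m, c⟩ := p
  rcases lt_trichotomy k m with hkm | rfl | hmk
  · exact absurd (i_mem_support _)
      (hk ⟨⟨(k, m), hkm⟩, !c⟩ (mem_rootsOf.mpr (by simp [i, j, hmc])))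
  · cases c
    exacts [absurd hmc (hbasis k), rfl]
  · exact absurd (j_mem_support _)
      (hk ⟨⟨(m, k), hmk⟩, !c⟩
        (mem_rootsOf.mpr (by simp [i, j, apply_true_symm hw hinv hmc])))

theorem eq_prod_rootsOf (hw : IsSignedPerm σ) (hinv : σ * σ = 1)
    (hbasis : ∀ i : Fin n, σ (i, true) ≠ (i, false)) :
    σ = ((rootsOf σ).toList.map rootPerm).prod := by
  have hdisj := rootsOf_pairwise_disjoint hw hinv
  refine Equiv.ext fun ⟨k, t⟩ => ?_
  by_cases hk : ∃ r ∈ rootsOf σ, k ∈ r.support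
  · obtain ⟨r, hr, hk⟩ := hk
    rw [prod_rootPerm_apply_of_mem_support (Finset.nodup_toList _) (by simpa using hdisj)
      (Finset.mem_toList.mpr hr) hk, apply_eq_rootPerm_apply_of_mem_rootsOf hw hinv hr hk]
  · push Not at hk
    rw [prod_rootPerm_apply_of_forall_notMem_support (by simpa using hk),
      apply_eq_self_of_forall_notMem_support hw hinv hbasis hk]

end Hyperoctahedral

/-- Every basis involution `σ` in the hyperoctahedral group (i.e. `σ² = 1`,
`σ(-i) = -σ(i)`, and `σ(i) ≠ -i` for all `i`) is the product of the reflections in a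
unique set `D` of pairwise orthogonal roots of the form `ε_i ± ε_j`. -/
theorem stmt14 (n : ℕ) (σ : Equiv.Perm (Fin n × Bool))
    (hw : ∀ p : Fin n × Bool, σ (p.1, !p.2) = ((σ p).1, !(σ p).2))
    (hinv : σ * σ = 1)
    (hbasis : ∀ i : Fin n, σ (i, true) ≠ (i, false)) :
    ∃ D : Finset (SRoot n),
      (∀ r1 ∈ D, ∀ r2 ∈ D, r1 ≠ r2 → (inner ℝ (rootVec r1) (rootVec r2) : ℝ) = 0) ∧
      (∃ l : List (SRoot n), l.Nodup ∧ l.toFinset = D ∧ σ = (l.map rootPerm).prod) ∧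
      (∀ D' : Finset (SRoot n),
        (∀ r1 ∈ D', ∀ r2 ∈ D', r1 ≠ r2 → (inner ℝ (rootVec r1) (rootVec r2) : ℝ) = 0) →
        (∃ l : List (SRoot n), l.Nodup ∧ l.toFinset = D' ∧ σ = (l.map rootPerm).prod) →
        D' = D) := by
  refine ⟨rootsOf σ, fun r hr s hs hne => (inner_rootVec_eq_zero_iff r s).mpr
      (Or.inr (rootsOf_pairwise_disjoint hw hinv r hr s hs hne)),
    ⟨_, (rootsOf σ).nodup_toList, (rootsOf σ).toList_toFinset,
      eq_prod_rootsOf hw hinv hbasis⟩, ?_⟩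
  rintro D' hD' ⟨l, hnd, rfl, rfl⟩
  exact toFinset_eq_rootsOf_prod hnd (by simpa using hD') hbasis
end
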